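/- Let e ≥ 2 and let |λ, s⟩ be a charged bipartition which is a source vertex of the ŝl_e-crystal (i.e. it has no good removable i-box for any i ∈ ℤ/eℤ) and which has exactly one good addable box over all residues; let i ∈ ℤ/eℤ be its residue and b the good addable i-box. Then the charged bipartition |λ ∪ {b}, s⟩ obtained by adding the box b to λ has a good addable i-box and a good addable (i−1)-box; in particular it has good addable boxes of two distinct residues. -/

import Mathlib

namespace GUnBranching

/-- A partition, given by its (0-indexed) weakly decreasing, eventually zero
sequence of parts: `part k` is the (k+1)-st part `λ_{k+1}`. -/
structure Partition where
  part : ℕ → ℕ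
  antitone : ∀ i j : ℕ, i ≤ j → part j ≤ part i
  eventually_zero : ∃ N : ℕ, ∀ n : ℕ, N ≤ n → part n = 0

namespace Partition

/-- The set of boxes (row, column) (0-indexed) of the Young diagram of a partition. -/
def boxSet (p : Partition) : Set (ℕ × ℕ) := {b | b.2 < p.part b.1}

/-- The size `|λ|` of a partition: the number of boxes of its Young diagram. -/
noncomputable def size (p : Partition) : ℕ := p.boxSet.ncard

/-- The β-set `β(λ) = {λ_k - k + 1 : k ≥ 1}` (0-indexed: `{part k - k : k ∈ ℕ}`). -/
def betaSet (p : Partition) : Set ℤ := {z | ∃ k : ℕ, z = (p.part k : ℤ) - k}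

/-- The charged β-set `{λ_k + s - k + 1 : k ≥ 1}` of `(λ, s)`. -/
def chargedBetaSet (p : Partition) (s : ℤ) : Set ℤ :=
  {z | ∃ k : ℕ, z = (p.part k : ℤ) + s - k}

/-- The number of (nonzero) parts of a partition. -/
noncomputable def length (p : Partition) : ℕ := {k : ℕ | p.part k ≠ 0}.ncard

end Partition

/-- The empty partition `∅`. -/
def emptyPartition : Partition :=
  ⟨fun _ => 0, fun _ _ _ => le_rfl, ⟨0, fun _ _ => rfl⟩⟩

/-- The partition `3^a 2^b 1^c` (a parts equal to 3, b parts equal to 2, c parts equal to 1). -/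
def threeTwoOne (a b c : ℕ) : Partition where
  part k := if k < a then 3 else if k < a + b then 2 else if k < a + b + c then 1 else 0
  antitone i j h := by (try dsimp only); split_ifs <;> omega
  eventually_zero := ⟨a + b + c, fun n hn => by (try dsimp only); split_ifs <;> omega⟩

/-- The column partition `1^m`. -/
def column (m : ℕ) : Partition := threeTwoOne 0 0 m

/-- The staircase partition `Δ_t = (t, t-1, …, 2, 1)`. -/
def staircase (t : ℕ) : Partition where
  part k := t - k
  antitone i j h := Nat.sub_le_sub_left h t
  eventually_zero := ⟨t, fun n hn => Nat.sub_eq_zero_of_le hn⟩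

/-- The partition `Δ_t ⊔ 1^r` (staircase with a column of `r` extra parts equal to 1). -/
def staircaseColumn (t r : ℕ) : Partition where
  part k := if k < t then t - k else if k < t + r then 1 else 0
  antitone i j h := by (try dsimp only); split_ifs <;> omega
  eventually_zero := ⟨t + r, fun n hn => by (try dsimp only); split_ifs <;> omega⟩

/-- `p ⊔ 1^r` : append `r` extra parts equal to 1 to the partition `p`. -/
noncomputable def appendOnes (p : Partition) (r : ℕ) : Partition where
  part k := max (p.part k) (if k < p.length + r then 1 else 0)
  antitone i j h := max_le_max (p.antitone i j h) (by split_ifs <;> omega)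
  eventually_zero := by
    obtain ⟨N, hN⟩ := p.eventually_zero
    refine ⟨max N (p.length + r), fun n hn => ?_⟩
    have h1 : p.part n = 0 := hN n (le_trans (le_max_left _ _) hn)
    have h2 : ¬ n < p.length + r := by
      have := le_trans (le_max_right N (p.length + r)) hn
      omega
    simp [h1, h2]

/-- `mu` is obtained from `lam` by removing one rim `e`-hook: on β-sets, a bead `x`
with an empty spot at `x - e` is moved to `x - e`. -/
def RemoveHook (e : ℕ) (lam mu : Partition) : Prop :=
  ∃ x : ℤ, x ∈ lam.betaSet ∧ (x - e) ∉ lam.betaSet ∧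
    mu.betaSet = insert (x - e) (lam.betaSet \ {x})

/-- A partition is an `e`-core if no rim `e`-hook can be removed from it. -/
def IsECore (e : ℕ) (p : Partition) : Prop := ∀ mu : Partition, ¬ RemoveHook e p mu

/-- `core` is the `e`-core of `lam`: it is obtained from `lam` by repeatedly removing
rim `e`-hooks, and no further rim `e`-hook can be removed. -/
def HasECore (e : ℕ) (lam core : Partition) : Prop :=
  Relation.ReflTransGen (RemoveHook e) lam core ∧ IsECore e core

/-- `lam` and `mu` have the same `e`-core. -/
def SameECore (e : ℕ) (lam mu : Partition) : Prop :=
  ∃ core : Partition, HasECore e lam core ∧ HasECore e mu core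

/-- `(q1, q2)` is the 2-quotient of `lam`: the odd (resp. even) β-numbers of `lam`,
transformed by `v ↦ (v+1)/2` (resp. `v ↦ v/2`), form the β-set of `q1` (resp. `q2`)
for a suitable charge. -/
def IsTwoQuotient (lam q1 q2 : Partition) : Prop :=
  (∃ c : ℤ, q1.chargedBetaSet c = {z : ℤ | 2 * z - 1 ∈ lam.betaSet}) ∧
  (∃ c : ℤ, q2.chargedBetaSet c = {z : ℤ | 2 * z ∈ lam.betaSet})

/-- The charge `s_t`: `(-(t+1+e)/2, t/2)` for even `t`, `(-(t+1)/2, (t+e)/2)` for odd `t`. -/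
def tauCharge (e t : ℕ) : ℤ × ℤ :=
  if t % 2 = 0 then (-(((t : ℤ) + 1 + e) / 2), (t : ℤ) / 2)
  else (-(((t : ℤ) + 1) / 2), ((t : ℤ) + e) / 2)

/-- `bp` is the twisted 2-quotient `τ(lam)` of `lam`, a partition with 2-core `Δ_t`:
it is the 2-quotient for even `t` and the swapped 2-quotient for odd `t`; the
corresponding charge is `tauCharge e t`. -/
def IsTwistedQuotient (t : ℕ) (lam : Partition) (bp : Partition × Partition) : Prop :=
  HasECore 2 lam (staircase t) ∧
  (if t % 2 = 0 then IsTwoQuotient lam bp.1 bp.2 else IsTwoQuotient lam bp.2 bp.1)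

/-- The abacus of a charged bipartition: positions are (column, row) where row
`0 : Fin 2` is the bottom row (first component, charge `s.1`) and row `1 : Fin 2`
the top row (second component, charge `s.2`). -/
def abacus (bp : Partition × Partition) (s : ℤ × ℤ) : Set (ℤ × Fin 2) :=
  {b | b.1 ∈ (if b.2 = (0 : Fin 2) then bp.1.chargedBetaSet s.1 else bp.2.chargedBetaSet s.2)}

/-- `P` is an `e`-period of the abacus `A`: beads `(x, r 0), (x-1, r 1), …, (x-e+1, r (e-1))`
of `A` where `x` is the largest column containing a bead of `A`, `r i = 0` (bottom row)
whenever `(x - i, bottom)` is a bead of `A` (for `i < e-1`), and once in the bottom row the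
period stays in the bottom row. -/
def IsEPeriodOf (e : ℕ) (A P : Set (ℤ × Fin 2)) : Prop :=
  ∃ (x : ℤ) (r : ℕ → Fin 2),
    P = {b | ∃ i : ℕ, i < e ∧ b = ((x - i : ℤ), r i)} ∧
    (∀ i : ℕ, i < e → ((x - i : ℤ), r i) ∈ A) ∧
    (∀ b ∈ A, b.1 ≤ x) ∧
    (∀ i : ℕ, i + 1 < e → ((x - i : ℤ), (0 : Fin 2)) ∈ A → r i = 0) ∧
    (∀ i : ℕ, i + 1 < e → r i = 0 → r (i + 1) = 0)

/-- `P 0, P 1, P 2, …` is the sequence of `e`-periods of `A`: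
each `P k` is the `e`-period of `A` minus the previous periods. -/
def IsPeriodSeq (e : ℕ) (A : Set (ℤ × Fin 2)) (P : ℕ → Set (ℤ × Fin 2)) : Prop :=
  ∀ k : ℕ, IsEPeriodOf e (A \ ⋃ i ∈ Finset.range k, P i) (P k)

/-- The abacus `A` is totally `e`-periodic: the `k`-th `e`-period exists for every `k`. -/
def TotallyPeriodic (e : ℕ) (A : Set (ℤ × Fin 2)) : Prop :=
  ∃ P : ℕ → Set (ℤ × Fin 2), IsPeriodSeq e A P

/-- `P` is the `(k+1)`-st `e`-period of `A` (so `k = 0` gives the first `e`-period). -/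
def IsKthPeriod (e : ℕ) (A : Set (ℤ × Fin 2)) (k : ℕ) (P : Set (ℤ × Fin 2)) : Prop :=
  ∃ Q : ℕ → Set (ℤ × Fin 2),
    (∀ i : ℕ, i ≤ k → IsEPeriodOf e (A \ ⋃ j ∈ Finset.range i, Q j) (Q i)) ∧ Q k = P

/-- Shift a set of abacus positions one step to the right. -/
def shiftRight (P : Set (ℤ × Fin 2)) : Set (ℤ × Fin 2) := {b | (b.1 - 1, b.2) ∈ P}

/-- Edge of the `sl_∞`-crystal moving the `(k+1)`-st `e`-period one step to the right:
the shifted period must again be the `(k+1)`-st `e`-period of the resulting abacus. -/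
def SlInfEdgeAt (e : ℕ) (s : ℤ × ℤ) (k : ℕ) (lam mu : Partition × Partition) : Prop :=
  TotallyPeriodic e (abacus lam s) ∧ TotallyPeriodic e (abacus mu s) ∧
  ∃ P : Set (ℤ × Fin 2),
    IsKthPeriod e (abacus lam s) k P ∧
    abacus mu s = (abacus lam s \ P) ∪ shiftRight P ∧
    IsKthPeriod e (abacus mu s) k (shiftRight P)

/-- Edge of the `sl_∞`-crystal. -/
def SlInfEdge (e : ℕ) (s : ℤ × ℤ) (lam mu : Partition × Partition) : Prop :=
  ∃ k : ℕ, SlInfEdgeAt e s k lam mu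

/-- A source vertex of the `sl_∞`-crystal: a vertex (totally `e`-periodic abacus)
with no incoming edge. -/
def IsSlInfSource (e : ℕ) (s : ℤ × ℤ) (bp : Partition × Partition) : Prop :=
  TotallyPeriodic e (abacus bp s) ∧ ∀ lam : Partition × Partition, ¬ SlInfEdge e s lam bp

/-- A box of a bipartition: (component, row, column), all 0-indexed
(component `0 : Fin 2` is the first component `λ¹`). -/
abbrev Box := Fin 2 × ℕ × ℕ

/-- The component of a bipartition indexed by `j : Fin 2`. -/
def comp (bp : Partition × Partition) (j : Fin 2) : Partition :=
  if j = 0 then bp.1 else bp.2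

/-- `b` is a box of the bipartition `bp`. -/
def IsBoxOf (bp : Partition × Partition) (b : Box) : Prop :=
  b.2.2 < (comp bp b.1).part b.2.1

/-- The (charged) content `ct(b) = y - x + s_j` of a box `b = (j, x, y)`. -/
def content (s : ℤ × ℤ) (b : Box) : ℤ :=
  (b.2.2 : ℤ) - (b.2.1 : ℤ) + (if b.1 = 0 then s.1 else s.2)

/-- `b` is an addable box of the bipartition `bp`. -/
def IsAddable (bp : Partition × Partition) (b : Box) : Prop :=
  b.2.2 = (comp bp b.1).part b.2.1 ∧
  (b.2.1 = 0 ∨ (comp bp b.1).part b.2.1 < (comp bp b.1).part (b.2.1 - 1))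

/-- `b` is a removable box of the bipartition `bp`. -/
def IsRemovable (bp : Partition × Partition) (b : Box) : Prop :=
  b.2.2 + 1 = (comp bp b.1).part b.2.1 ∧
  (comp bp b.1).part (b.2.1 + 1) < (comp bp b.1).part b.2.1

/-- The total order on addable/removable boxes: `b ≤ b'` iff `b = b'`, or
`ct(b) < ct(b')`, or the contents are equal, `b` lies in the second component and
`b'` in the first. -/
def boxLE (s : ℤ × ℤ) (b b' : Box) : Prop :=
  b = b' ∨ content s b < content s b' ∨
    (content s b = content s b' ∧ b.1 = 1 ∧ b'.1 = 0)

/-- The set of addable or removable boxes of residue `i` (the letters of the `i`-word). -/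
def IWord (e : ℕ) (s : ℤ × ℤ) (bp : Partition × Partition) (i : ZMod e) : Set Box :=
  {b | (IsAddable bp b ∨ IsRemovable bp b) ∧ ((content s b : ZMod e) = i)}

/-- A removable box of residue `i` surviving the Kashiwara cancellation: reading the
`i`-word in increasing order and cancelling each removable box with a following addable
box (recursively cancelling adjacent removable-addable pairs), `b` is not cancelled.
Equivalently, every final segment of the `i`-word starting at `b` contains strictly
more removable than addable boxes. -/
def SurvivingRemovable (e : ℕ) (s : ℤ × ℤ) (bp : Partition × Partition)
    (i : ZMod e) (b : Box) : Prop :=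
  b ∈ IWord e s bp i ∧ IsRemovable bp b ∧
  ∀ c ∈ IWord e s bp i, boxLE s b c →
    {d : Box | d ∈ IWord e s bp i ∧ IsAddable bp d ∧ boxLE s b d ∧ boxLE s d c}.ncard <
    {d : Box | d ∈ IWord e s bp i ∧ IsRemovable bp d ∧ boxLE s b d ∧ boxLE s d c}.ncard

/-- The good removable `i`-box: the smallest removable `i`-box surviving the
Kashiwara cancellation. -/
def IsGoodRemovable (e : ℕ) (s : ℤ × ℤ) (bp : Partition × Partition)
    (i : ZMod e) (b : Box) : Prop :=
  SurvivingRemovable e s bp i b ∧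
  ∀ b' : Box, SurvivingRemovable e s bp i b' → boxLE s b b'

/-- An addable box of residue `i` surviving the Kashiwara cancellation. -/
def SurvivingAddable (e : ℕ) (s : ℤ × ℤ) (bp : Partition × Partition)
    (i : ZMod e) (b : Box) : Prop :=
  b ∈ IWord e s bp i ∧ IsAddable bp b ∧
  ∀ c ∈ IWord e s bp i, boxLE s c b →
    {d : Box | d ∈ IWord e s bp i ∧ IsRemovable bp d ∧ boxLE s c d ∧ boxLE s d b}.ncard <
    {d : Box | d ∈ IWord e s bp i ∧ IsAddable bp d ∧ boxLE s c d ∧ boxLE s d b}.ncard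

/-- The good addable `i`-box: the largest addable `i`-box surviving the
Kashiwara cancellation. -/
def IsGoodAddable (e : ℕ) (s : ℤ × ℤ) (bp : Partition × Partition)
    (i : ZMod e) (b : Box) : Prop :=
  SurvivingAddable e s bp i b ∧
  ∀ b' : Box, SurvivingAddable e s bp i b' → boxLE s b' b

/-- A source vertex of the `ŝl_e`-crystal: no good removable `i`-box for any residue `i`. -/
def IsSlESource (e : ℕ) (s : ℤ × ℤ) (bp : Partition × Partition) : Prop :=
  ∀ (i : ZMod e) (b : Box), ¬ IsGoodRemovable e s bp i b

/-- `bp'` is obtained from `bp` by adding the box `b`. -/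
def AddBox (bp : Partition × Partition) (b : Box) (bp' : Partition × Partition) : Prop :=
  if b.1 = 0 then
    bp'.2 = bp.2 ∧ bp'.1.part = Function.update bp.1.part b.2.1 (bp.1.part b.2.1 + 1)
  else
    bp'.1 = bp.1 ∧ bp'.2.part = Function.update bp.2.part b.2.1 (bp.2.part b.2.1 + 1)

/-- Dominance order: `Dominates mu la` means `la ⊴ mu`. -/
def Dominates (mu la : Partition) : Prop :=
  ∀ k : ℕ, ∑ i ∈ Finset.range k, la.part i ≤ ∑ i ∈ Finset.range k, mu.part i

/-!
In each residue, Kashiwara's cancellation removes addable and removable boxes in pairs, so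
`#(surviving addable) + #(removable) = #(surviving removable) + #(addable)`; for an abstract word
of `+` and `-` letters this follows by cancelling an adjacent `-+` pair and inducting. At a source
vertex no removable box survives, and a bipartition has two more addable than removable boxes, so
exactly two addable boxes survive in total. Since `b` is the only good addable box, both have
residue `i`: they are `b` and some `a < b`. Adding `b` changes the status only of `b` and of boxes
of content `ct(b) ± 1`, whose residues `i ± 1` differ from `i` as `e ≥ 2`; so the `i`-word is
unchanged except at `b > a`, and `a` still survives. In residue `i - 1` the source vertex had as
many addable as removable boxes, and adding `b` either makes the box below `b` addable or the box
left of `b` non-removable; now the addable `(i - 1)`-boxes outnumber the removable ones, so one of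
them survives.
-/

open Finset

section Signature

open Classical

variable {α : Type*} [LinearOrder α] (plus : α → Prop)

/-- The signature of the window `[c, z]` of the word `S`, whose letters satisfying `plus`
count `+1` and the others `-1`. -/
noncomputable def signature (S : Finset α) (c z : α) : ℤ :=
  ∑ d ∈ S with c ≤ d ∧ d ≤ z, if plus d then 1 else -1

def IsSurvivingPlus (S : Finset α) (z : α) : Prop :=
  z ∈ S ∧ plus z ∧ ∀ c ∈ S, c ≤ z → 0 < signature plus S c z

def IsSurvivingMinus (S : Finset α) (z : α) : Prop :=
  z ∈ S ∧ ¬ plus z ∧ ∀ c ∈ S, z ≤ c → signature plus S z c < 0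

/-- A minus letter `r` and a plus letter `a > r` with no letter of `S` between them; they are
adjacent in the word `insert r (insert a S)`. -/
structure IsAdjacentMinusPlus (S : Finset α) (r a : α) : Prop where
  not_plus_left : ¬ plus r
  plus_right : plus a
  lt : r < a
  gap : ∀ x ∈ S, x < r ∨ a < x

variable {plus}

lemma signature_congr {S : Finset α} {c z c' z' : α}
    (h : ∀ d ∈ S, (c ≤ d ∧ d ≤ z ↔ c' ≤ d ∧ d ≤ z')) :
    signature plus S c z = signature plus S c' z' := by
  unfold signature
  rw [filter_congr h]

lemma signature_insert {S : Finset α} {x : α} (hx : x ∉ S) (c z : α) :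
    signature plus (insert x S) c z =
      signature plus S c z + if c ≤ x ∧ x ≤ z then (if plus x then 1 else -1) else 0 := by
  unfold signature
  rw [filter_insert]
  by_cases h : c ≤ x ∧ x ≤ z
  · rw [if_pos h, if_pos h, sum_insert (fun hx' => hx (mem_filter.1 hx').1), add_comm]
  · rw [if_neg h, if_neg h, add_zero]

lemma signature_eq_card_sub_card (S : Finset α) (c z : α) :
    signature plus S c z =
      #{d ∈ S | plus d ∧ c ≤ d ∧ d ≤ z} -
        #{d ∈ S | ¬ plus d ∧ c ≤ d ∧ d ≤ z} := by
  rw [signature, sum_ite, sum_const, sum_const, filter_filter, filter_filter, nsmul_eq_mul,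
    nsmul_eq_mul, mul_one, mul_neg_one, ← sub_eq_add_neg]
  congr 3 <;> ext d <;> simp only [mem_filter] <;> tauto

lemma signature_pos {S : Finset α} {c z : α} (hz : z ∈ S) (hcz : c ≤ z)
    (h : ∀ d ∈ S, c ≤ d → d ≤ z → plus d) : 0 < signature plus S c z := by
  unfold signature
  rw [sum_congr rfl fun d hd => if_pos (h d (mem_filter.1 hd).1 (mem_filter.1 hd).2.1
    (mem_filter.1 hd).2.2), sum_const, nsmul_eq_mul, mul_one, Nat.cast_pos, card_pos]
  exact ⟨z, mem_filter.2 ⟨hz, hcz, le_rfl⟩⟩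

lemma signature_neg {S : Finset α} {z c : α} (hz : z ∈ S) (hzc : z ≤ c)
    (h : ∀ d ∈ S, z ≤ d → d ≤ c → ¬ plus d) : signature plus S z c < 0 := by
  unfold signature
  rw [sum_congr rfl fun d hd => if_neg (h d (mem_filter.1 hd).1 (mem_filter.1 hd).2.1
    (mem_filter.1 hd).2.2), sum_const, smul_neg, nsmul_eq_mul, mul_one, neg_neg_iff_pos,
    Nat.cast_pos, card_pos]
  exact ⟨z, mem_filter.2 ⟨hz, le_rfl, hzc⟩⟩

lemma isSurvivingPlus_iff {S : Finset α} {z : α} :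
    IsSurvivingPlus plus S z ↔
      z ∈ S ∧ plus z ∧ ∀ c, c ≤ z → 0 < signature plus S c z := by
  refine ⟨fun ⟨hz, hplus, hpos⟩ => ⟨hz, hplus, fun c hcz => ?_⟩,
    fun ⟨hz, hplus, hpos⟩ => ⟨hz, hplus, fun c _ => hpos c⟩⟩
  obtain ⟨c', hc', hmin⟩ := exists_min_image {d ∈ S | c ≤ d ∧ d ≤ z} id
    ⟨z, mem_filter.2 ⟨hz, hcz, le_rfl⟩⟩
  obtain ⟨hc'S, hcc', hc'z⟩ := mem_filter.1 hc'
  rw [signature_congr fun d hd => ⟨fun hd' => ⟨hmin d (mem_filter.2 ⟨hd, hd'⟩), hd'.2⟩,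
    fun hd' => ⟨hcc'.trans hd'.1, hd'.2⟩⟩]
  exact hpos c' hc'S hc'z

lemma isSurvivingMinus_iff {S : Finset α} {z : α} :
    IsSurvivingMinus plus S z ↔
      z ∈ S ∧ ¬ plus z ∧ ∀ c, z ≤ c → signature plus S z c < 0 := by
  refine ⟨fun ⟨hz, hminus, hneg⟩ => ⟨hz, hminus, fun c hzc => ?_⟩,
    fun ⟨hz, hminus, hneg⟩ => ⟨hz, hminus, fun c _ => hneg c⟩⟩
  obtain ⟨c', hc', hmax⟩ := exists_max_image {d ∈ S | z ≤ d ∧ d ≤ c} id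
    ⟨z, mem_filter.2 ⟨hz, le_rfl, hzc⟩⟩
  obtain ⟨hc'S, hzc', hc'c⟩ := mem_filter.1 hc'
  rw [signature_congr fun d hd => ⟨fun hd' => ⟨hd'.1, hmax d (mem_filter.2 ⟨hd, hd'⟩)⟩,
    fun hd' => ⟨hd'.1, hd'.2.trans hc'c⟩⟩]
  exact hneg c' hc'S hzc'

namespace IsAdjacentMinusPlus

variable {S : Finset α} {r a : α}

lemma notMem_left (h : IsAdjacentMinusPlus plus S r a) : r ∉ insert a S := by
  rintro hr
  rcases mem_insert.1 hr with hra | hrS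
  · exact h.lt.ne hra
  · rcases h.gap r hrS with h' | h' <;> order [h.lt]

lemma notMem_right (h : IsAdjacentMinusPlus plus S r a) : a ∉ S :=
  fun haS => by rcases h.gap a haS with h' | h' <;> order [h.lt]

lemma signature_insert_insert (h : IsAdjacentMinusPlus plus S r a) (c z : α) :
    signature plus (insert r (insert a S)) c z = signature plus S c z
      + (if c ≤ a ∧ a ≤ z then 1 else 0) - (if c ≤ r ∧ r ≤ z then 1 else 0) := by
  rw [signature_insert h.notMem_left, signature_insert h.notMem_right, if_pos h.plus_right,
    if_neg h.not_plus_left]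
  split_ifs <;> ring

lemma mem_Icc_right_iff_mem_Icc_left (h : IsAdjacentMinusPlus plus S r a) {c z : α}
    (hc : c ∈ S) (hz : z ∈ S) : (c ≤ a ∧ a ≤ z) ↔ (c ≤ r ∧ r ≤ z) := by
  have hra := h.lt
  rcases h.gap c hc with hc' | hc' <;> rcases h.gap z hz with hz' | hz' <;>
    constructor <;> rintro ⟨h1, h2⟩ <;> exact ⟨by order, by order⟩

lemma mem_Icc_right_of_mem_Icc_left (h : IsAdjacentMinusPlus plus S r a) {c z : α}
    (hz : z ∈ S) (hcr : c ≤ r) (hrz : r ≤ z) : c ≤ a ∧ a ≤ z := by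
  have hra := h.lt
  rcases h.gap z hz with hz' | hz' <;> exact ⟨by order, by order⟩

lemma mem_Icc_left_of_mem_Icc_right (h : IsAdjacentMinusPlus plus S r a) {c z : α}
    (hz : z ∈ S) (hza : z ≤ a) (hac : a ≤ c) : z ≤ r ∧ r ≤ c := by
  have hra := h.lt
  rcases h.gap z hz with hz' | hz' <;> exact ⟨by order, by order⟩

lemma isSurvivingPlus_insert_insert_iff (h : IsAdjacentMinusPlus plus S r a) {z : α}
    (hz : z ∈ S) :
    IsSurvivingPlus plus (insert r (insert a S)) z ↔ IsSurvivingPlus plus S z := by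
  constructor
  · rintro ⟨-, hplus, hpos⟩
    refine ⟨hz, hplus, fun c hc hcz => ?_⟩
    have := hpos c (mem_insert_of_mem (mem_insert_of_mem hc)) hcz
    rwa [h.signature_insert_insert, if_congr (h.mem_Icc_right_iff_mem_Icc_left hc hz) rfl rfl,
      add_sub_cancel_right] at this
  · rw [isSurvivingPlus_iff, isSurvivingPlus_iff]
    rintro ⟨-, hplus, hpos⟩
    refine ⟨mem_insert_of_mem (mem_insert_of_mem hz), hplus, fun c hcz => ?_⟩
    have := hpos c hcz
    rw [h.signature_insert_insert]
    by_cases hr : c ≤ r ∧ r ≤ z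
    · rw [if_pos (h.mem_Icc_right_of_mem_Icc_left hz hr.1 hr.2), if_pos hr]
      linarith
    · rw [if_neg hr]
      split_ifs <;> linarith

lemma isSurvivingMinus_insert_insert_iff (h : IsAdjacentMinusPlus plus S r a) {z : α}
    (hz : z ∈ S) :
    IsSurvivingMinus plus (insert r (insert a S)) z ↔ IsSurvivingMinus plus S z := by
  constructor
  · rintro ⟨-, hminus, hneg⟩
    refine ⟨hz, hminus, fun c hc hzc => ?_⟩
    have := hneg c (mem_insert_of_mem (mem_insert_of_mem hc)) hzc
    rwa [h.signature_insert_insert, if_congr (h.mem_Icc_right_iff_mem_Icc_left hz hc) rfl rfl,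
      add_sub_cancel_right] at this
  · rw [isSurvivingMinus_iff, isSurvivingMinus_iff]
    rintro ⟨-, hminus, hneg⟩
    refine ⟨mem_insert_of_mem (mem_insert_of_mem hz), hminus, fun c hzc => ?_⟩
    have := hneg c hzc
    rw [h.signature_insert_insert]
    by_cases ha : z ≤ a ∧ a ≤ c
    · rw [if_pos ha, if_pos (h.mem_Icc_left_of_mem_Icc_right hz ha.1 ha.2)]
      linarith
    · rw [if_neg ha]
      split_ifs <;> linarith

lemma signature_insert_insert_left_right (h : IsAdjacentMinusPlus plus S r a) :
    signature plus (insert r (insert a S)) r a = 0 := by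
  rw [h.signature_insert_insert, if_pos ⟨h.lt.le, le_rfl⟩, if_pos ⟨le_rfl, h.lt.le⟩,
    add_sub_cancel_right]
  refine sum_eq_zero fun d hd => absurd (mem_filter.1 hd) ?_
  rintro ⟨hd, hrd, hda⟩
  rcases h.gap d hd with h' | h' <;> order

lemma filter_isSurvivingPlus_insert_insert (h : IsAdjacentMinusPlus plus S r a) :
    {z ∈ insert r (insert a S) | IsSurvivingPlus plus (insert r (insert a S)) z} =
      {z ∈ S | IsSurvivingPlus plus S z} := by
  ext z
  simp only [mem_filter, mem_insert]
  constructor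
  · rintro ⟨(rfl | rfl | hz), hsurv⟩
    · exact absurd hsurv.2.1 h.not_plus_left
    · exact absurd (hsurv.2.2 r (mem_insert_self _ _) h.lt.le)
        (by rw [h.signature_insert_insert_left_right]; order)
    · exact ⟨hz, (h.isSurvivingPlus_insert_insert_iff hz).1 hsurv⟩
  · rintro ⟨hz, hsurv⟩
    exact ⟨.inr (.inr hz), (h.isSurvivingPlus_insert_insert_iff hz).2 hsurv⟩

lemma filter_isSurvivingMinus_insert_insert (h : IsAdjacentMinusPlus plus S r a) :
    {z ∈ insert r (insert a S) | IsSurvivingMinus plus (insert r (insert a S)) z} =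
      {z ∈ S | IsSurvivingMinus plus S z} := by
  ext z
  simp only [mem_filter, mem_insert]
  constructor
  · rintro ⟨(rfl | rfl | hz), hsurv⟩
    · exact absurd (hsurv.2.2 a (mem_insert_of_mem (mem_insert_self _ _)) h.lt.le)
        (by rw [h.signature_insert_insert_left_right]; order)
    · exact absurd h.plus_right hsurv.2.1
    · exact ⟨hz, (h.isSurvivingMinus_insert_insert_iff hz).1 hsurv⟩
  · rintro ⟨hz, hsurv⟩
    exact ⟨.inr (.inr hz), (h.isSurvivingMinus_insert_insert_iff hz).2 hsurv⟩

end IsAdjacentMinusPlus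

lemma exists_isAdjacentMinusPlus {S : Finset α}
    (h : ∃ r ∈ S, ∃ a ∈ S, ¬ plus r ∧ plus a ∧ r < a) :
    ∃ r a S', IsAdjacentMinusPlus plus S' r a ∧ S = insert r (insert a S') := by
  -- the least plus letter preceded by a minus letter, and the last minus letter before it
  obtain ⟨a, ha, hamin⟩ := exists_min_image
    {a ∈ S | plus a ∧ ∃ r ∈ S, ¬ plus r ∧ r < a} id
    (by
      obtain ⟨r, hr, a, ha, h⟩ := h
      exact ⟨a, mem_filter.2 ⟨ha, h.2.1, r, hr, h.1, h.2.2⟩⟩)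
  obtain ⟨haS, hplus, hex⟩ := mem_filter.1 ha
  obtain ⟨r, hr, hrmax⟩ := exists_max_image {r ∈ S | ¬ plus r ∧ r < a} id
    (by obtain ⟨r, hr, h⟩ := hex; exact ⟨r, mem_filter.2 ⟨hr, h⟩⟩)
  obtain ⟨hrS, hminus, hra⟩ := mem_filter.1 hr
  refine ⟨r, a, (S.erase r).erase a, ⟨hminus, hplus, hra, fun x hx => ?_⟩, ?_⟩
  · obtain ⟨hxa, hxr, hxS⟩ : x ≠ a ∧ x ≠ r ∧ x ∈ S := by simpa using hx
    by_contra! hx'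
    by_cases hx : plus x
    · have : a ≤ x :=
        hamin x (mem_filter.2 ⟨hxS, hx, r, hrS, hminus, lt_of_le_of_ne hx'.1 hxr.symm⟩)
      order
    · have : x ≤ r := hrmax x (mem_filter.2 ⟨hxS, hx, lt_of_le_of_ne hx'.2 hxa⟩)
      order
  · rw [insert_erase (mem_erase.2 ⟨hra.ne', haS⟩), insert_erase hrS]

theorem card_isSurvivingPlus_add_card_minus (S : Finset α) :
    #{z ∈ S | IsSurvivingPlus plus S z} + #{z ∈ S | ¬ plus z} =
      #{z ∈ S | IsSurvivingMinus plus S z} + #{z ∈ S | plus z} := by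
  induction S using Finset.strongInduction with
  | H S ih =>
  by_cases hpair : ∃ r ∈ S, ∃ a ∈ S, ¬ plus r ∧ plus a ∧ r < a
  · -- cancel an adjacent pair
    obtain ⟨r, a, S, h, rfl⟩ := exists_isAdjacentMinusPlus hpair
    have hsub : S ⊂ insert r (insert a S) :=
      Finset.ssubset_of_ssubset_of_subset (ssubset_insert h.notMem_right) (subset_insert _ _)
    rw [h.filter_isSurvivingPlus_insert_insert, h.filter_isSurvivingMinus_insert_insert,
      filter_insert, filter_insert, filter_insert, filter_insert, if_neg h.not_plus_left,
      if_pos h.not_plus_left, if_pos h.plus_right, if_neg (not_not.2 h.plus_right),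
      card_insert_of_notMem fun hr => h.notMem_left (mem_insert_of_mem (mem_filter.1 hr).1),
      card_insert_of_notMem fun ha => h.notMem_right (mem_filter.1 ha).1]
    have := ih S hsub
    omega
  · -- all plus letters precede all minus letters, and every letter survives
    push Not at hpair
    have hplus : {z ∈ S | IsSurvivingPlus plus S z} = {z ∈ S | plus z} :=
      filter_congr fun z hz => ⟨fun h => h.2.1, fun hz' => ⟨hz, hz', fun c _ hcz =>
        signature_pos hz hcz fun d hd _ hdz => by
          by_contra hd'
          exact hd' (le_antisymm hdz (hpair d hd z hz hd' hz') ▸ hz')⟩⟩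
    have hminus : {z ∈ S | IsSurvivingMinus plus S z} = {z ∈ S | ¬ plus z} :=
      filter_congr fun z hz => ⟨fun h => h.2.1, fun hz' => ⟨hz, hz', fun c _ hzc =>
        signature_neg hz hzc fun d hd hzd _ hd' =>
          hz' (le_antisymm (hpair z hz d hd hz' hd') hzd ▸ hd')⟩⟩
    rw [hplus, hminus, add_comm]

end Signature

lemma ncard_eq_card_filter_image {β γ : Type*} [DecidableEq γ] {W : Set β} (hW : W.Finite)
    {f : β → γ} (hf : Set.InjOn f W) (T : Set β) (hTW : T ⊆ W) {Q : γ → Prop}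
    [DecidablePred Q] (hQ : ∀ d ∈ W, d ∈ T ↔ Q (f d)) :
    T.ncard = #{z ∈ hW.toFinset.image f | Q z} := by
  rw [← Set.ncard_coe_finset, ← (hf.mono hTW).ncard_image]
  congr 1
  ext z
  simp only [coe_filter, mem_image, Set.Finite.mem_toFinset, Set.mem_image]
  exact ⟨fun ⟨a, ha, hfa⟩ => ⟨⟨a, hTW ha, hfa⟩, hfa ▸ (hQ a (hTW ha)).1 ha⟩,
    fun ⟨⟨a, ha, hfa⟩, hq⟩ => ⟨a, (hQ a ha).2 (hfa ▸ hq), hfa⟩⟩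

lemma ncard_eq_sum_ncard_fiber {β γ : Type*} [Fintype γ] {P : β → Prop}
    (hP : {x | P x}.Finite) (f : β → γ) :
    {x | P x}.ncard = ∑ c, {x | P x ∧ f x = c}.ncard := by
  classical
  rw [Set.ncard_eq_toFinset_card _ hP,
    card_eq_sum_card_fiberwise (f := f) (t := univ) fun _ _ => mem_univ _]
  refine sum_congr rfl fun c _ => ?_
  rw [← Set.ncard_coe_finset]
  congr 1
  ext x
  simp

section Boxes

variable {s : ℤ × ℤ} {bp : Partition × Partition}

lemma IsAddable.not_isRemovable {d : Box} (h : IsAddable bp d) : ¬ IsRemovable bp d :=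
  fun h' => by have := h.1; have := h'.1; omega

lemma eq_of_content_eq {d d' : Box} (hd : IsAddable bp d ∨ IsRemovable bp d)
    (hd' : IsAddable bp d' ∨ IsRemovable bp d') (hj : d.1 = d'.1)
    (hct : content s d = content s d') : d = d' := by
  obtain ⟨j, x, y⟩ := d
  obtain ⟨j', x', y'⟩ := d'
  obtain rfl : j = j' := hj
  simp only [content, add_left_inj] at hct
  simp only [IsAddable, IsRemovable] at hd hd'
  set p := comp bp j
  rcases lt_trichotomy x x' with hlt | rfl | hgt
  · have := p.antitone (x + 1) x' hlt
    have := p.antitone x (x + 1) x.le_succ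
    omega
  · obtain rfl : y = y' := by omega
    rfl
  · have := p.antitone (x' + 1) x hgt
    have := p.antitone x' (x' + 1) x'.le_succ
    omega

lemma boxLE_antisymm {d d' : Box} (h : boxLE s d d') (h' : boxLE s d' d) : d = d' := by
  rcases h with rfl | h | ⟨hct, hj, hj'⟩ <;>
    rcases h' with h' | h' | ⟨hct', hj'', hj'''⟩ <;> first | exact h'.symm | rfl | omega

/-- `boxLE` orders boxes by content, the second component first at equal content;
`boxKey` realizes this order in `ℤ`. -/
def boxKey (s : ℤ × ℤ) (d : Box) : ℤ := 2 * content s d + if d.1 = 0 then 1 else 0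

lemma boxLE_iff_boxKey_le {d d' : Box} (hd : IsAddable bp d ∨ IsRemovable bp d)
    (hd' : IsAddable bp d' ∨ IsRemovable bp d') :
    boxLE s d d' ↔ boxKey s d ≤ boxKey s d' := by
  have hinj := eq_of_content_eq (s := s) hd hd'
  obtain ⟨j, x, y⟩ := d
  obtain ⟨j', x', y'⟩ := d'
  simp only [boxLE, boxKey, content, Prod.mk.injEq] at hinj ⊢
  split_ifs at hinj ⊢ <;> omega

lemma finite_setOf_isAddable_or_isRemovable (bp : Partition × Partition) :
    {d : Box | IsAddable bp d ∨ IsRemovable bp d}.Finite := by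
  obtain ⟨N₁, hN₁⟩ := bp.1.eventually_zero
  obtain ⟨N₂, hN₂⟩ := bp.2.eventually_zero
  have hbound : ∀ j x, (N₁ + N₂ ≤ x → (comp bp j).part x = 0) ∧
      (comp bp j).part x ≤ bp.1.part 0 + bp.2.part 0 := by
    intro j x
    have h₁ := bp.1.antitone 0 x x.zero_le
    have h₂ := bp.2.antitone 0 x x.zero_le
    unfold comp
    split_ifs
    · exact ⟨fun hx => hN₁ x (by omega), by omega⟩
    · exact ⟨fun hx => hN₂ x (by omega), by omega⟩
  refine (Set.finite_univ.prod ((Set.finite_Iic (N₁ + N₂)).prod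
    (Set.finite_Iic (bp.1.part 0 + bp.2.part 0)))).subset ?_
  rintro ⟨j, x, y⟩ hd
  have h₀ := hbound j x
  have h₁ := hbound j (x - 1)
  simp only [Set.mem_ofPred_eq, IsAddable, IsRemovable] at hd
  simp only [Set.mem_prod, Set.mem_univ, Set.mem_Iic, true_and]
  omega

lemma finite_iWord (e : ℕ) (s : ℤ × ℤ) (bp : Partition × Partition) (i : ZMod e) :
    (IWord e s bp i).Finite :=
  (finite_setOf_isAddable_or_isRemovable bp).subset fun _ hd => hd.1

end Boxes

def addableOfResidue (e : ℕ) (s : ℤ × ℤ) (bp : Partition × Partition) (i : ZMod e) :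
    Set Box :=
  {d | IsAddable bp d ∧ (content s d : ZMod e) = i}

def removableOfResidue (e : ℕ) (s : ℤ × ℤ) (bp : Partition × Partition) (i : ZMod e) :
    Set Box :=
  {d | IsRemovable bp d ∧ (content s d : ZMod e) = i}

lemma finite_addableOfResidue (e : ℕ) (s : ℤ × ℤ) (bp : Partition × Partition)
    (i : ZMod e) : (addableOfResidue e s bp i).Finite :=
  (finite_setOf_isAddable_or_isRemovable bp).subset fun _ hd => .inl hd.1

lemma finite_removableOfResidue (e : ℕ) (s : ℤ × ℤ) (bp : Partition × Partition)
    (i : ZMod e) : (removableOfResidue e s bp i).Finite :=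
  (finite_setOf_isAddable_or_isRemovable bp).subset fun _ hd => .inr hd.1

section Transport

open Classical

variable {e : ℕ} {s : ℤ × ℤ} {bp : Partition × Partition} {i : ZMod e}

noncomputable def keyWord (e : ℕ) (s : ℤ × ℤ) (bp : Partition × Partition) (i : ZMod e) :
    Finset ℤ :=
  (finite_iWord e s bp i).toFinset.image (boxKey s)

def IsAddableKey (s : ℤ × ℤ) (bp : Partition × Partition) (z : ℤ) : Prop :=
  ∃ d, IsAddable bp d ∧ boxKey s d = z

lemma boxKey_mem_keyWord {d : Box} (hd : d ∈ IWord e s bp i) :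
    boxKey s d ∈ keyWord e s bp i :=
  mem_image_of_mem _ ((finite_iWord e s bp i).mem_toFinset.2 hd)

lemma forall_mem_keyWord {P : ℤ → Prop} :
    (∀ z ∈ keyWord e s bp i, P z) ↔ ∀ d ∈ IWord e s bp i, P (boxKey s d) := by
  rw [keyWord, forall_mem_image]
  simp only [Set.Finite.mem_toFinset]

lemma boxKey_injOn_iWord : Set.InjOn (boxKey s) (IWord e s bp i) :=
  fun _ hd _ hd' h => boxLE_antisymm ((boxLE_iff_boxKey_le hd.1 hd'.1).2 h.le)
    ((boxLE_iff_boxKey_le hd'.1 hd.1).2 h.ge)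

lemma isAddableKey_boxKey_iff {d : Box} (hd : d ∈ IWord e s bp i) :
    IsAddableKey s bp (boxKey s d) ↔ IsAddable bp d := by
  refine ⟨fun ⟨d', hd', h⟩ => ?_, fun h => ⟨d, h, rfl⟩⟩
  obtain rfl : d' = d := boxLE_antisymm ((boxLE_iff_boxKey_le (.inl hd') hd.1).2 h.le)
    ((boxLE_iff_boxKey_le hd.1 (.inl hd')).2 h.ge)
  exact hd'

lemma not_isAddableKey_boxKey_iff {d : Box} (hd : d ∈ IWord e s bp i) :
    ¬ IsAddableKey s bp (boxKey s d) ↔ IsRemovable bp d := by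
  rw [isAddableKey_boxKey_iff hd]
  exact ⟨hd.1.resolve_left, fun h h' => h'.not_isRemovable h⟩

lemma signature_keyWord {c z : Box} (hc : c ∈ IWord e s bp i) (hz : z ∈ IWord e s bp i) :
    signature (IsAddableKey s bp) (keyWord e s bp i) (boxKey s c) (boxKey s z) =
      ({d | d ∈ IWord e s bp i ∧ IsAddable bp d ∧ boxLE s c d ∧ boxLE s d z}.ncard : ℤ) -
        {d | d ∈ IWord e s bp i ∧ IsRemovable bp d ∧ boxLE s c d ∧ boxLE s d z}.ncard := by
  have hwindow : ∀ d ∈ IWord e s bp i,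
      (boxLE s c d ∧ boxLE s d z ↔ boxKey s c ≤ boxKey s d ∧ boxKey s d ≤ boxKey s z) :=
    fun d hd => and_congr (boxLE_iff_boxKey_le hc.1 hd.1) (boxLE_iff_boxKey_le hd.1 hz.1)
  have hcard := ncard_eq_card_filter_image (finite_iWord e s bp i) boxKey_injOn_iWord
  rw [signature_eq_card_sub_card, keyWord,
    hcard {d | d ∈ IWord e s bp i ∧ IsAddable bp d ∧ boxLE s c d ∧ boxLE s d z}
      (fun d hd => hd.1)
      (Q := fun x => IsAddableKey s bp x ∧ boxKey s c ≤ x ∧ x ≤ boxKey s z)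
      fun d hd => (and_iff_right hd).trans
        (and_congr (isAddableKey_boxKey_iff hd).symm (hwindow d hd)),
    hcard {d | d ∈ IWord e s bp i ∧ IsRemovable bp d ∧ boxLE s c d ∧ boxLE s d z}
      (fun d hd => hd.1)
      (Q := fun x => ¬ IsAddableKey s bp x ∧ boxKey s c ≤ x ∧ x ≤ boxKey s z)
      fun d hd => (and_iff_right hd).trans
        (and_congr (not_isAddableKey_boxKey_iff hd).symm (hwindow d hd))]

lemma survivingAddable_iff {d : Box} (hd : d ∈ IWord e s bp i) :
    SurvivingAddable e s bp i d ↔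
      IsSurvivingPlus (IsAddableKey s bp) (keyWord e s bp i) (boxKey s d) := by
  unfold SurvivingAddable IsSurvivingPlus
  rw [isAddableKey_boxKey_iff hd, forall_mem_keyWord]
  refine and_congr (iff_of_true hd (boxKey_mem_keyWord hd))
    (and_congr_right' (forall₂_congr fun c hc => ?_))
  rw [boxLE_iff_boxKey_le hc.1 hd.1, signature_keyWord hc hd, sub_pos, Nat.cast_lt]

lemma survivingRemovable_iff {d : Box} (hd : d ∈ IWord e s bp i) :
    SurvivingRemovable e s bp i d ↔
      IsSurvivingMinus (IsAddableKey s bp) (keyWord e s bp i) (boxKey s d) := by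
  unfold SurvivingRemovable IsSurvivingMinus
  rw [not_isAddableKey_boxKey_iff hd, forall_mem_keyWord]
  refine and_congr (iff_of_true hd (boxKey_mem_keyWord hd))
    (and_congr_right' (forall₂_congr fun c hc => ?_))
  rw [boxLE_iff_boxKey_le hd.1 hc.1, signature_keyWord hd hc, sub_neg, Nat.cast_lt]

theorem ncard_survivingAddable_add_ncard_removable (e : ℕ) (s : ℤ × ℤ)
    (bp : Partition × Partition) (i : ZMod e) :
    {d | SurvivingAddable e s bp i d}.ncard + (removableOfResidue e s bp i).ncard =
      {d | SurvivingRemovable e s bp i d}.ncard + (addableOfResidue e s bp i).ncard := by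
  have hcard := ncard_eq_card_filter_image (finite_iWord e s bp i) boxKey_injOn_iWord
  rw [hcard {d | SurvivingAddable e s bp i d} (fun d hd => hd.1) fun d hd =>
      survivingAddable_iff hd,
    hcard (removableOfResidue e s bp i) (fun d hd => ⟨.inr hd.1, hd.2⟩)
      (Q := fun z => ¬ IsAddableKey s bp z) fun d hd =>
      (and_iff_left hd.2).trans (not_isAddableKey_boxKey_iff hd).symm,
    hcard {d | SurvivingRemovable e s bp i d} (fun d hd => hd.1) fun d hd =>
      survivingRemovable_iff hd,
    hcard (addableOfResidue e s bp i) (fun d hd => ⟨.inl hd.1, hd.2⟩) fun d hd =>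
      (and_iff_left hd.2).trans (isAddableKey_boxKey_iff hd).symm]
  exact card_isSurvivingPlus_add_card_minus _

end Transport

section Counting

variable {e : ℕ} {s : ℤ × ℤ} {bp : Partition × Partition}

lemma exists_isGoodAddable {i : ZMod e} (h : ∃ d, SurvivingAddable e s bp i d) :
    ∃ c, IsGoodAddable e s bp i c := by
  obtain ⟨c, hc, hmax⟩ := Set.exists_max_image {d | SurvivingAddable e s bp i d} (boxKey s)
    ((finite_iWord e s bp i).subset fun _ hd => hd.1) h
  exact ⟨c, hc, fun d hd => (boxLE_iff_boxKey_le hd.1.1 hc.1.1).2 (hmax d hd)⟩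

lemma IsSlESource.not_survivingRemovable (h : IsSlESource e s bp) (i : ZMod e) (d : Box) :
    ¬ SurvivingRemovable e s bp i d := fun hd => by
  obtain ⟨c, hc, hmin⟩ := Set.exists_min_image {d | SurvivingRemovable e s bp i d} (boxKey s)
    ((finite_iWord e s bp i).subset fun _ hd => hd.1) ⟨d, hd⟩
  exact h i c ⟨hc, fun d hd => (boxLE_iff_boxKey_le hc.1.1 hd.1.1).2 (hmin d hd)⟩

lemma exists_isGoodAddable_of_ncard_lt {i : ZMod e}
    (h : (removableOfResidue e s bp i).ncard < (addableOfResidue e s bp i).ncard) :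
    ∃ c, IsGoodAddable e s bp i c := by
  have := ncard_survivingAddable_add_ncard_removable e s bp i
  exact exists_isGoodAddable
    (Set.nonempty_of_ncard_ne_zero (s := {d | SurvivingAddable e s bp i d}) (by omega))

lemma ncard_isAddable_eq_ncard_isRemovable_add_two (bp : Partition × Partition) :
    {d : Box | IsAddable bp d}.ncard = {d : Box | IsRemovable bp d}.ncard + 2 := by
  have hrow : {d : Box | IsAddable bp d} ∩ {d | d.2.1 = 0} =
      {((0 : Fin 2), 0, bp.1.part 0), ((1 : Fin 2), 0, bp.2.part 0)} := by
    ext ⟨j, x, y⟩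
    fin_cases j <;> simp only [IsAddable, comp] <;> simp [and_comm] <;> rintro rfl <;> simp
  -- the addable box in the row below a removable box
  have himage : (fun d : Box => (d.1, d.2.1 + 1, (comp bp d.1).part (d.2.1 + 1))) ''
      {d | IsRemovable bp d} = {d : Box | IsAddable bp d} \ {d | d.2.1 = 0} := by
    ext ⟨j, x, y⟩
    simp only [Set.mem_image, Set.mem_sdiff, Set.mem_ofPred_eq, IsAddable, IsRemovable,
      Prod.exists, Prod.mk.injEq]
    constructor
    · rintro ⟨j, x, y, ⟨-, hlt⟩, rfl, rfl, rfl⟩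
      exact ⟨⟨rfl, .inr hlt⟩, x.succ_ne_zero⟩
    · rintro ⟨⟨rfl, hx⟩, hx0⟩
      obtain ⟨x, rfl⟩ := Nat.exists_eq_succ_of_ne_zero hx0
      have hx : (comp bp j).part (x + 1) < (comp bp j).part x := by simpa using hx
      exact ⟨j, x, (comp bp j).part x - 1, ⟨by omega, hx⟩, rfl, rfl, rfl⟩
  have hinj : Set.InjOn (fun d : Box => (d.1, d.2.1 + 1, (comp bp d.1).part (d.2.1 + 1)))
      {d | IsRemovable bp d} := by
    rintro ⟨j, x, y⟩ ⟨hd, -⟩ ⟨j', x', y'⟩ ⟨hd', -⟩ h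
    simp only [Prod.mk.injEq, add_left_inj] at h hd hd'
    obtain ⟨rfl, rfl, -⟩ := h
    obtain rfl : y = y' := by omega
    rfl
  rw [← Set.ncard_inter_add_ncard_sdiff_eq_ncard {d : Box | IsAddable bp d} {d | d.2.1 = 0}
      ((finite_setOf_isAddable_or_isRemovable bp).subset fun _ => .inl),
    hrow, ← himage, hinj.ncard_image, Set.ncard_pair (by simp), add_comm]

lemma IsSlESource.ncard_addableOfResidue_eq (h : IsSlESource e s bp) (i : ZMod e) :
    (addableOfResidue e s bp i).ncard =
      {d | SurvivingAddable e s bp i d}.ncard + (removableOfResidue e s bp i).ncard := by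
  have hnone : {d | SurvivingRemovable e s bp i d} = ∅ :=
    Set.eq_empty_of_forall_notMem (h.not_survivingRemovable i)
  have := ncard_survivingAddable_add_ncard_removable e s bp i
  rw [hnone, Set.ncard_empty, zero_add] at this
  exact this.symm

lemma IsSlESource.sum_ncard_survivingAddable [NeZero e] (h : IsSlESource e s bp) :
    ∑ i : ZMod e, {d | SurvivingAddable e s bp i d}.ncard = 2 := by
  have hA := ncard_eq_sum_ncard_fiber (P := IsAddable bp)
    ((finite_setOf_isAddable_or_isRemovable bp).subset fun _ => .inl)
    fun d => (content s d : ZMod e)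
  have hR := ncard_eq_sum_ncard_fiber (P := IsRemovable bp)
    ((finite_setOf_isAddable_or_isRemovable bp).subset fun _ => .inr)
    fun d => (content s d : ZMod e)
  have hsum : ∑ i : ZMod e, (addableOfResidue e s bp i).ncard = ∑ i : ZMod e,
      ({d | SurvivingAddable e s bp i d}.ncard + (removableOfResidue e s bp i).ncard) :=
    sum_congr rfl fun i _ => h.ncard_addableOfResidue_eq i
  rw [sum_add_distrib] at hsum
  have := ncard_isAddable_eq_ncard_isRemovable_add_two bp
  simp only [removableOfResidue, addableOfResidue] at hsum
  omega

end Counting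

lemma SurvivingAddable.of_status_eq {e : ℕ} {s : ℤ × ℤ} {bp bp' : Partition × Partition}
    {i : ZMod e} {a : Box} (hW : IWord e s bp' i = IWord e s bp i)
    (hstatus : ∀ d ∈ IWord e s bp i, boxLE s d a →
      (IsAddable bp' d ↔ IsAddable bp d) ∧ (IsRemovable bp' d ↔ IsRemovable bp d))
    (ha : SurvivingAddable e s bp i a) : SurvivingAddable e s bp' i a := by
  have hwindow : ∀ {P P' : Box → Prop} {c : Box},
      (∀ d ∈ IWord e s bp i, boxLE s d a → (P' d ↔ P d)) →
      {d | d ∈ IWord e s bp' i ∧ P' d ∧ boxLE s c d ∧ boxLE s d a} =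
        {d | d ∈ IWord e s bp i ∧ P d ∧ boxLE s c d ∧ boxLE s d a} := by
    intro P P' c hPP'
    ext d
    rw [Set.mem_ofPred_eq, Set.mem_ofPred_eq, hW]
    exact and_congr_right fun hd => and_congr_left fun hle => hPP' d hd hle.2
  refine ⟨hW ▸ ha.1, (hstatus a ha.1 (.inl rfl)).1.2 ha.2.1, fun c hc hca => ?_⟩
  rw [hwindow fun d hd hle => (hstatus d hd hle).1, hwindow fun d hd hle => (hstatus d hd hle).2]
  exact ha.2.2 c (hW ▸ hc) hca

namespace AddBox

variable {e : ℕ} {s : ℤ × ℤ} {bp bp' : Partition × Partition} {b : Box}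

lemma comp_of_ne (h : AddBox bp b bp') {j : Fin 2} (hj : j ≠ b.1) :
    comp bp' j = comp bp j := by
  unfold AddBox at h
  unfold comp
  split_ifs at h ⊢ <;> first | exact h.1 | omega

lemma part_comp (h : AddBox bp b bp') :
    (comp bp' b.1).part =
      Function.update (comp bp b.1).part b.2.1 ((comp bp b.1).part b.2.1 + 1) := by
  unfold AddBox at h
  unfold comp
  split_ifs at h ⊢ <;> exact h.2

lemma isAddable (h : AddBox bp b bp') (hb : IsAddable bp b) {d : Box}
    (hd : IsAddable bp d) (hdb : d ≠ b) : IsAddable bp' d := by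
  obtain ⟨j, x', y'⟩ := d
  obtain ⟨j₀, x, y⟩ := b
  by_cases hj : j = j₀
  · subst hj
    have hp := h.part_comp
    simp only [IsAddable, ne_eq, Prod.mk.injEq, true_and] at hp hb hd hdb ⊢
    rw [hp]
    simp only [Function.update_apply]
    split_ifs <;> subst_vars <;> omega
  · simpa [IsAddable, h.comp_of_ne hj] using hd

lemma isRemovable_of (h : AddBox bp b bp') (hb : IsAddable bp b) {d : Box}
    (hd : IsRemovable bp' d) (hdb : d ≠ b) : IsRemovable bp d := by
  obtain ⟨j, x', y'⟩ := d
  obtain ⟨j₀, x, y⟩ := b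
  by_cases hj : j = j₀
  · subst hj
    have hp := h.part_comp
    simp only [IsAddable, IsRemovable, ne_eq, Prod.mk.injEq, true_and] at hp hb hd hdb ⊢
    rw [hp] at hd
    simp only [Function.update_apply] at hd
    split_ifs at hd <;> subst_vars <;> omega
  · simpa [IsRemovable, h.comp_of_ne hj] using hd

lemma isRemovable_self (h : AddBox bp b bp') (hb : IsAddable bp b) : IsRemovable bp' b := by
  obtain ⟨j, x, y⟩ := b
  have hp := h.part_comp
  simp only [IsAddable, IsRemovable] at hp hb ⊢
  rw [hp]
  simp only [Function.update_apply]
  have := (comp bp j).antitone x (x + 1) x.le_succ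
  split_ifs <;> omega

lemma status_of_content_ne (h : AddBox bp b bp') (hb : IsAddable bp b) {d : Box}
    (hdb : d ≠ b) (h₁ : content s d ≠ content s b + 1)
    (h₂ : content s d ≠ content s b - 1) :
    (IsAddable bp' d ↔ IsAddable bp d) ∧ (IsRemovable bp' d ↔ IsRemovable bp d) := by
  obtain ⟨j, x', y'⟩ := d
  obtain ⟨j₀, x, y⟩ := b
  by_cases hj : j = j₀
  · subst hj
    have hp := h.part_comp
    simp only [IsAddable, IsRemovable, content, ne_eq, Prod.mk.injEq, true_and]
      at hp hb hdb h₁ h₂ ⊢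
    rw [hp]
    simp only [Function.update_apply]
    split_ifs <;> subst_vars <;> omega
  · simp [IsAddable, IsRemovable, h.comp_of_ne hj]

lemma exists_content_sub_one_status_change (h : AddBox bp b bp') (hb : IsAddable bp b) :
    ∃ d, content s d = content s b - 1 ∧
      (IsAddable bp' d ∧ ¬ IsAddable bp d ∨ IsRemovable bp d ∧ ¬ IsRemovable bp' d) := by
  obtain ⟨j, x, y⟩ := b
  have hp := h.part_comp
  have := (comp bp j).antitone x (x + 1) x.le_succ
  simp only [IsAddable] at hp hb
  by_cases hy : (comp bp j).part (x + 1) = y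
  · -- the box below `b` becomes addable
    refine ⟨(j, x + 1, y), by simp only [content]; push_cast; ring, .inl ?_⟩
    simp only [IsAddable, hp, Function.update_apply, Nat.add_sub_cancel, Nat.add_one_ne_zero,
      false_or]
    split_ifs <;> omega
  · -- the box left of `b` is no longer removable
    refine ⟨(j, x, y - 1), by simp only [content]; push_cast [show 1 ≤ y by omega]; ring,
      .inr ?_⟩
    simp only [IsRemovable, hp, Function.update_apply]
    split_ifs <;> omega

lemma status_of_residue_eq (h : AddBox bp b bp') (hb : IsAddable bp b)
    (hone : (1 : ZMod e) ≠ 0) {d : Box} (hdb : d ≠ b)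
    (hd : (content s d : ZMod e) = content s b) :
    (IsAddable bp' d ↔ IsAddable bp d) ∧ (IsRemovable bp' d ↔ IsRemovable bp d) :=
  h.status_of_content_ne hb hdb
    (fun h₁ => hone (by rw [h₁, Int.cast_add, Int.cast_one] at hd; simpa using hd))
    (fun h₂ => hone (by rw [h₂, Int.cast_sub, Int.cast_one] at hd; simpa using hd))

lemma iWord_eq (h : AddBox bp b bp') (hb : IsAddable bp b) (hone : (1 : ZMod e) ≠ 0)
    {i : ZMod e} (hi : (content s b : ZMod e) = i) : IWord e s bp' i = IWord e s bp i := by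
  ext d
  by_cases hdb : d = b
  · subst hdb
    exact iff_of_true ⟨.inr (h.isRemovable_self hb), hi⟩ ⟨.inl hb, hi⟩
  · refine and_congr_left fun hd => ?_
    obtain ⟨hA, hR⟩ := h.status_of_residue_eq hb hone hdb (hd.trans hi.symm)
    rw [hA, hR]

lemma survivingAddable (h : AddBox bp b bp') (hb : IsAddable bp b)
    (hone : (1 : ZMod e) ≠ 0) {i : ZMod e} (hi : (content s b : ZMod e) = i) {a : Box}
    (ha : SurvivingAddable e s bp i a) (hab : boxLE s a b) (hne : a ≠ b) :
    SurvivingAddable e s bp' i a :=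
  ha.of_status_eq (h.iWord_eq hb hone hi) fun _ hd hda =>
    h.status_of_residue_eq hb hone (fun hdb => hne (boxLE_antisymm hab (hdb ▸ hda)))
      (hd.2.trans hi.symm)

lemma ncard_addable_add_ncard_removable_lt (h : AddBox bp b bp') (hb : IsAddable bp b)
    {j : ZMod e} (hbj : (content s b : ZMod e) ≠ j)
    (hj : ((content s b - 1 : ℤ) : ZMod e) = j) :
    (addableOfResidue e s bp j).ncard + (removableOfResidue e s bp' j).ncard <
      (addableOfResidue e s bp' j).ncard + (removableOfResidue e s bp j).ncard := by
  have hA : addableOfResidue e s bp j ⊆ addableOfResidue e s bp' j := fun d hd =>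
    ⟨h.isAddable hb hd.1 fun hdb => hbj (hdb ▸ hd.2), hd.2⟩
  have hR : removableOfResidue e s bp' j ⊆ removableOfResidue e s bp j := fun d hd =>
    ⟨h.isRemovable_of hb hd.1 fun hdb => hbj (hdb ▸ hd.2), hd.2⟩
  obtain ⟨d, hd, hgain | hloss⟩ := h.exists_content_sub_one_status_change (s := s) hb
  · have := Set.ncard_lt_ncard ((Set.ssubset_iff_of_subset hA).2
      ⟨d, ⟨hgain.1, hd ▸ hj⟩, fun hd' => hgain.2 hd'.1⟩)
      (finite_addableOfResidue e s bp' j)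
    have := Set.ncard_le_ncard hR (finite_removableOfResidue e s bp j)
    omega
  · have := Set.ncard_lt_ncard ((Set.ssubset_iff_of_subset hR).2
      ⟨d, ⟨hloss.1, hd ▸ hj⟩, fun hd' => hloss.2 hd'.1⟩)
      (finite_removableOfResidue e s bp j)
    have := Set.ncard_le_ncard hA (finite_addableOfResidue e s bp' j)
    omega

end AddBox

/-- If `|λ, s⟩` is a source vertex of the `ŝl_e`-crystal with exactly
one good addable box `b` (over all residues), of residue `i`, then after adding `b` the
resulting charged bipartition has a good addable `i`-box and a good addable `(i-1)`-box;
in particular good addable boxes of two distinct residues. -/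
theorem add_unique_good_box_two_residues
    (e : ℕ) (he : 2 ≤ e) (s : ℤ × ℤ) (bp : Partition × Partition)
    (hsource : IsSlESource e s bp)
    (i : ZMod e) (b : Box) (hgood : IsGoodAddable e s bp i b)
    (huniq : ∀ (i' : ZMod e) (b' : Box), IsGoodAddable e s bp i' b' → i' = i ∧ b' = b)
    (bp' : Partition × Partition) (hbp' : AddBox bp b bp') :
    (∃ c : Box, IsGoodAddable e s bp' i c) ∧
    (∃ c : Box, IsGoodAddable e s bp' (i - 1) c) ∧
    i ≠ i - 1 := by
  have : NeZero e := ⟨by omega⟩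
  have : Fact (1 < e) := ⟨he⟩
  have hi : i ≠ i - 1 := fun h => one_ne_zero (sub_eq_self.1 h.symm)
  obtain ⟨⟨hbW, hb, -⟩, hbmax⟩ := hgood
  have hnone : ∀ j ≠ i, {d | SurvivingAddable e s bp j d} = ∅ := fun j hj =>
    Set.eq_empty_of_forall_notMem fun d hd =>
      hj (huniq j _ (exists_isGoodAddable ⟨d, hd⟩).choose_spec).1
  -- both surviving addable boxes of the source vertex have residue `i`
  obtain ⟨a, ha, hab⟩ : ∃ a, SurvivingAddable e s bp i a ∧ a ≠ b := by
    have htwo := hsource.sum_ncard_survivingAddable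
    rw [sum_eq_single i (fun j _ hj => by rw [hnone j hj, Set.ncard_empty])
      (fun h => absurd (mem_univ i) h)] at htwo
    exact Set.exists_ne_of_one_lt_ncard (s := {d | SurvivingAddable e s bp i d}) (by omega) b
  have hbal := hsource.ncard_addableOfResidue_eq (i - 1)
  rw [hnone _ hi.symm, Set.ncard_empty, zero_add] at hbal
  have hlt := hbp'.ncard_addable_add_ncard_removable_lt (s := s) hb (j := i - 1)
    (hbW.2.trans_ne hi) (by push_cast [hbW.2]; rfl)
  exact ⟨exists_isGoodAddable
      ⟨a, hbp'.survivingAddable hb one_ne_zero hbW.2 ha (hbmax a ha) hab⟩,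
    exists_isGoodAddable_of_ncard_lt (by omega), hi⟩

end GUnBranching
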